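/- Let k ≥ 1, let y_1 ≠ y_2 ∈ ℝ^k, let a_1, a_2 > 0 be positive amplitudes, set m_min = min(a_1, a_2), and assume σ/m_min ≤ 1/2. If (4/Ω) · arcsin((σ/m_min)^{1/2}) ≤ ‖y_1 − y_2‖_2 ≤ π/Ω, then there do not exist â > 0 and ŷ ∈ ℝ^k such that |â e^{i ŷ·ω} − a_1 e^{i y_1·ω} − a_2 e^{i y_2·ω}| < 2σ for all ω ∈ ℝ^k with ‖ω‖_2 ≤ Ω. Consequently, for every image Y(ω) = F[μ](ω) + W(ω) of μ = a_1 δ_{y_1} + a_2 δ_{y_2} with |W(ω)| < σ for ‖ω‖_2 ≤ Ω, there is no positive σ-admissible measure of Y with one support point. -/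

import Mathlib

/-!
Test a one-spike model `â e^{i ŷ·ω}` at two frequencies. At `ω = 0` it forces
`â > a₁ + a₂ - 2σ`, so `|a₁ e^{i y₁·ω} + a₂ e^{i y₂·ω}| > a₁ + a₂ - 4σ` at every admissible `ω`.
At the frequency of modulus `Ω` along `y₁ - y₂` the square of that modulus is
`(a₁ + a₂)² - 4 a₁ a₂ sin²(Ω ‖y₁ - y₂‖ / 2)`, and the separation bound gives
`sin² ≥ sin²(2 arcsin √r) = 4 r (1 - r)` with `r = σ / m_min`; for `r ≤ 1/2` this pushes the
modulus below `a₁ + a₂ - 4σ`. The statement with noise follows by the triangle inequality.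
-/

open Real

lemma sin_two_mul_arcsin_sqrt_sq {r : ℝ} (hr₀ : 0 ≤ r) (hr₁ : r ≤ 1) :
    sin (2 * arcsin √r) ^ 2 = 4 * r * (1 - r) := by
  rw [sin_two_mul, sin_arcsin (by linarith [sqrt_nonneg r]) (sqrt_le_one.mpr hr₁), cos_arcsin,
    sq_sqrt hr₀, mul_pow, mul_pow, sq_sqrt hr₀, sq_sqrt (by linarith)]
  ring

lemma four_mul_mul_one_sub_le_sin_half_sq {r x : ℝ} (hr₀ : 0 ≤ r) (hr₁ : r ≤ 1)
    (hx₁ : 4 * arcsin √r ≤ x) (hx₂ : x ≤ π) :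
    4 * r * (1 - r) ≤ sin (x / 2) ^ 2 := by
  have hθ : 0 ≤ arcsin √r := arcsin_nonneg.mpr (sqrt_nonneg r)
  rw [← sin_two_mul_arcsin_sqrt_sq hr₀ hr₁]
  refine pow_le_pow_left₀ (sin_nonneg_of_nonneg_of_le_pi (by positivity) ?_) ?_ 2
  · linarith [arcsin_le_pi_div_two √r]
  · exact sin_le_sin_of_le_of_le_pi_div_two (by linarith [pi_pos]) (by linarith) (by linarith)

lemma norm_ofReal_mul_exp_add_sq (a b α β : ℝ) :
    ‖(a : ℂ) * Complex.exp (Complex.I * α) + (b : ℂ) * Complex.exp (Complex.I * β)‖ ^ 2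
      = (a + b) ^ 2 - 4 * a * b * sin ((α - β) / 2) ^ 2 := by
  have hcos : cos α * cos β + sin α * sin β = 1 - 2 * sin ((α - β) / 2) ^ 2 := by
    rw [← cos_sub, ← cos_two_mul_eq_one_sub, mul_div_cancel₀ _ two_ne_zero]
  have hcart : (a : ℂ) * Complex.exp (Complex.I * α) + (b : ℂ) * Complex.exp (Complex.I * β)
      = ((a * cos α + b * cos β : ℝ) : ℂ) + ((a * sin α + b * sin β : ℝ) : ℂ) * Complex.I := by
    rw [mul_comm Complex.I, mul_comm Complex.I, Complex.exp_mul_I, Complex.exp_mul_I]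
    push_cast
    ring
  rw [Complex.sq_norm, hcart, Complex.normSq_add_mul_I]
  linear_combination a ^ 2 * sin_sq_add_cos_sq α + b ^ 2 * sin_sq_add_cos_sq β + 2 * a * b * hcos

lemma add_sq_sub_four_mul_le {a₁ a₂ r s : ℝ} (ha₁ : 0 ≤ a₁) (ha₂ : 0 ≤ a₂) (hr₀ : 0 ≤ r)
    (hr₁ : r ≤ 1 / 2) (hs : 4 * r * (1 - r) ≤ s) :
    (a₁ + a₂) ^ 2 - 4 * a₁ * a₂ * s ≤ (a₁ + a₂ - 4 * r * min a₁ a₂) ^ 2 := by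
  rw [← min_add_max a₁ a₂, mul_assoc 4 a₁, ← min_mul_max a₁ a₂]
  have hm : 0 ≤ min a₁ a₂ := le_min ha₁ ha₂
  have hmM : 0 ≤ max a₁ a₂ - min a₁ a₂ := sub_nonneg.2 min_le_max
  nlinarith [mul_nonneg (mul_nonneg hr₀ hm) (mul_nonneg hmM (by linarith : 0 ≤ 1 - 2 * r)),
    mul_le_mul_of_nonneg_left hs (mul_nonneg hm (hm.trans min_le_max))]

lemma exists_norm_eq_inner_eq_mul_norm {E : Type*} [NormedAddCommGroup E] [InnerProductSpace ℝ E]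
    {v : E} (hv : v ≠ 0) {c : ℝ} (hc : 0 ≤ c) :
    ∃ ω : E, ‖ω‖ = c ∧ inner ℝ v ω = c * ‖v‖ := by
  have hv' : 0 < ‖v‖ := norm_pos_iff.2 hv
  refine ⟨(c / ‖v‖) • v, ?_, ?_⟩
  · rw [norm_smul, Real.norm_of_nonneg (by positivity), div_mul_cancel₀ _ hv'.ne']
  · rw [real_inner_smul_right, real_inner_self_eq_norm_sq]
    field_simp

lemma norm_sub_sub_lt_of_norm_sub_add_lt {E : Type*} [SeminormedAddCommGroup E] {e u v w : E}
    {σ : ℝ} (h : ‖e - (u + v + w)‖ < σ) (hw : ‖w‖ < σ) : ‖e - u - v‖ < 2 * σ :=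
  calc ‖e - u - v‖ = ‖(e - (u + v + w)) + w‖ := by congr 1; abel
    _ ≤ ‖e - (u + v + w)‖ + ‖w‖ := norm_add_le _ _
    _ < 2 * σ := by linarith

lemma not_exists_one_point_within_two_sigma {E : Type*} [NormedAddCommGroup E]
    [InnerProductSpace ℝ E] {Ω σ a₁ a₂ : ℝ} {y₁ y₂ : E} (hΩ : 0 < Ω) (hσ : 0 < σ)
    (hy : y₁ ≠ y₂) (ha₁ : 0 < a₁) (ha₂ : 0 < a₂) (hratio : σ / min a₁ a₂ ≤ 1 / 2)
    (hsep₁ : 4 / Ω * arcsin √(σ / min a₁ a₂) ≤ ‖y₁ - y₂‖) (hsep₂ : ‖y₁ - y₂‖ ≤ π / Ω) :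
    ¬ ∃ (ah : ℝ) (_ : 0 < ah) (yh : E), ∀ ω : E, ‖ω‖ ≤ Ω →
      ‖(ah : ℂ) * Complex.exp (Complex.I * (inner ℝ yh ω : ℝ))
        - (a₁ : ℂ) * Complex.exp (Complex.I * (inner ℝ y₁ ω : ℝ))
        - (a₂ : ℂ) * Complex.exp (Complex.I * (inner ℝ y₂ ω : ℝ))‖ < 2 * σ := by
  rintro ⟨ah, hah, yh, H⟩
  set m := min a₁ a₂
  set r := σ / m
  have hm : 0 < m := lt_min ha₁ ha₂
  have hr₀ : 0 ≤ r := by positivity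
  have hσr : σ = r * m := (div_mul_cancel₀ σ hm.ne').symm
  have hsum : 0 ≤ a₁ + a₂ - 4 * σ := by
    linarith [min_le_left a₁ a₂, min_le_right a₁ a₂, mul_le_mul_of_nonneg_right hratio hm.le]
  have hmass : a₁ + a₂ - 2 * σ < ah := by
    have H₀ := H 0 (norm_zero.trans_le hΩ.le)
    simp only [inner_zero_right, Complex.ofReal_zero, mul_zero, Complex.exp_zero, mul_one] at H₀
    rw [← Complex.ofReal_sub, ← Complex.ofReal_sub, Complex.norm_real, Real.norm_eq_abs] at H₀
    linarith [neg_abs_le (ah - a₁ - a₂)]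
  obtain ⟨ω, hω, hinner⟩ := exists_norm_eq_inner_eq_mul_norm (sub_ne_zero.2 hy) hΩ.le
  set Z := (a₁ : ℂ) * Complex.exp (Complex.I * (inner ℝ y₁ ω : ℝ))
    + (a₂ : ℂ) * Complex.exp (Complex.I * (inner ℝ y₂ ω : ℝ))
  have hZ : a₁ + a₂ - 4 * σ < ‖Z‖ := by
    have H₁ := H ω hω.le
    rw [sub_sub] at H₁
    have := norm_sub_norm_le ((ah : ℂ) * Complex.exp (Complex.I * (inner ℝ yh ω : ℝ))) Z
    rw [norm_mul, Complex.norm_exp_I_mul_ofReal, Complex.norm_real, Real.norm_of_nonneg hah.le,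
      mul_one] at this
    linarith
  have hsin : 4 * r * (1 - r) ≤ sin (Ω * ‖y₁ - y₂‖ / 2) ^ 2 :=
    four_mul_mul_one_sub_le_sin_half_sq hr₀ (by linarith)
      (by rwa [div_mul_eq_mul_div, div_le_iff₀' hΩ] at hsep₁)
      (by rwa [le_div_iff₀' hΩ] at hsep₂)
  have hZsq : ‖Z‖ ^ 2 ≤ (a₁ + a₂ - 4 * σ) ^ 2 := by
    rw [norm_ofReal_mul_exp_add_sq, ← inner_sub_left, hinner, hσr, ← mul_assoc]
    exact add_sq_sub_four_mul_le ha₁.le ha₂.le hr₀ hratio hsin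
  exact (pow_lt_pow_left₀ hZ hsum two_ne_zero).not_ge hZsq

theorem positive_two_point_resolution_lower_bound
    (k : ℕ) (Ω σ : ℝ) (hΩ : 0 < Ω) (hσ : 0 < σ)
    (y₁ y₂ : EuclideanSpace ℝ (Fin k)) (hy : y₁ ≠ y₂)
    (a₁ a₂ : ℝ) (ha₁ : 0 < a₁) (ha₂ : 0 < a₂)
    (mmin : ℝ) (hmmin : mmin = min a₁ a₂)
    (hratio : σ / mmin ≤ 1 / 2)
    (hsep₁ : 4 / Ω * Real.arcsin (Real.sqrt (σ / mmin)) ≤ ‖y₁ - y₂‖)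
    (hsep₂ : ‖y₁ - y₂‖ ≤ Real.pi / Ω) :
    (¬ ∃ (ah : ℝ) (_ : 0 < ah) (yh : EuclideanSpace ℝ (Fin k)),
        ∀ ω : EuclideanSpace ℝ (Fin k), ‖ω‖ ≤ Ω →
          ‖
            ((ah : ℂ) * Complex.exp (Complex.I * ((inner ℝ yh ω : ℝ) : ℂ))
              - (a₁ : ℂ) * Complex.exp (Complex.I * ((inner ℝ y₁ ω : ℝ) : ℂ))
              - (a₂ : ℂ) * Complex.exp (Complex.I * ((inner ℝ y₂ ω : ℝ) : ℂ)))‖ < 2 * σ) ∧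
    (∀ W : EuclideanSpace ℝ (Fin k) → ℂ,
      (∀ ω : EuclideanSpace ℝ (Fin k), ‖ω‖ ≤ Ω → ‖W ω‖ < σ) →
      ¬ ∃ (ah : ℝ) (_ : 0 < ah) (yh : EuclideanSpace ℝ (Fin k)),
          ∀ ω : EuclideanSpace ℝ (Fin k), ‖ω‖ ≤ Ω →
            ‖
              ((ah : ℂ) * Complex.exp (Complex.I * ((inner ℝ yh ω : ℝ) : ℂ))
                - ((a₁ : ℂ) * Complex.exp (Complex.I * ((inner ℝ y₁ ω : ℝ) : ℂ))
                  + (a₂ : ℂ) * Complex.exp (Complex.I * ((inner ℝ y₂ ω : ℝ) : ℂ))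
                  + W ω))‖ < σ) := by
  subst hmmin
  have hnoiseless := not_exists_one_point_within_two_sigma hΩ hσ hy ha₁ ha₂ hratio hsep₁ hsep₂
  refine ⟨hnoiseless, fun W hW ⟨ah, hah, yh, H⟩ => hnoiseless ⟨ah, hah, yh, fun ω hω => ?_⟩⟩
  exact norm_sub_sub_lt_of_norm_sub_add_lt (H ω hω) (hW ω hω)
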